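/- Let 𝔗 = (V, E, v_I, λ) be a transition system with finite V and labelling λ : V → α, and let w, w′ : ℕ → α be infinite words. Suppose there are strictly monotone functions c, c′ : ℕ → ℕ with c 0 = 0 and c′ 0 = 0 such that for every n, writing u_n for the finite word w(c n) ⋯ w(c (n+1) − 1) and u′_n for w′(c′ n) ⋯ w′(c′ (n+1) − 1), the blocks induce the same path transformations: for all vertices x, y ∈ V, x →^{u_n} y if and only if x →^{u′_n} y. Then w ∈ Tr(𝔗) if and only if w′ ∈ Tr(𝔗). -/

import Mathlib

/-- `x →^{u} y`: the transition system with edge relation `E` and labelling `lab` has a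
path from `x` to `y` labelled by the finite word `u`. -/
def TSReaches {V α : Type*} (E : V → V → Prop) (lab : V → α)
    (x : V) (u : List α) (y : V) : Prop :=
  ∃ ρ : ℕ → V, ρ 0 = x ∧ ρ u.length = y ∧
    ∀ j (hj : j < u.length), E (ρ j) (ρ (j + 1)) ∧ lab (ρ j) = u.get ⟨j, hj⟩

/-- The `n`-th block `w(c n) w(c n + 1) ⋯ w(c (n+1) − 1)` of the infinite word `w`
with respect to the factorization `c`. -/
def wordBlock {A : Type*} (w : ℕ → A) (c : ℕ → ℕ) (n : ℕ) : List A :=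
  (List.range (c (n + 1) - c n)).map (fun j => w (c n + j))

/-! For a factorization `c`, a path of `𝔗` labelled by `w` is the same thing as a
sequence of vertices `x 0 = v_I, x 1, x 2, …` with `x n →^{u_n} x (n+1)` for every `n`: cut the
path at the positions `c n`, or conversely glue the finite paths together. Since `u_n` and
`u′_n` induce the same relation `→`, such a sequence for `w` is one for `w′`. -/

section BlockIndex

variable {c : ℕ → ℕ} {m n : ℕ}

def blockIndex (c : ℕ → ℕ) (m : ℕ) : ℕ :=
  Nat.findGreatest (fun n => c n ≤ m) m

theorem apply_blockIndex_le (hc0 : c 0 = 0) (m : ℕ) : c (blockIndex c m) ≤ m :=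
  Nat.findGreatest_spec (P := fun n => c n ≤ m) (Nat.zero_le m) (by simp [hc0])

theorem lt_apply_blockIndex_succ (hc : StrictMono c) (m : ℕ) : m < c (blockIndex c m + 1) := by
  by_cases h : blockIndex c m + 1 ≤ m
  · exact lt_of_not_ge <|
      Nat.findGreatest_is_greatest (P := fun n => c n ≤ m) (n := m) (Nat.lt_succ_self _) h
  · exact (show m < blockIndex c m + 1 by omega).trans_le hc.le_apply

theorem blockIndex_eq_of_le_of_lt (hc : StrictMono c) (h₁ : c n ≤ m) (h₂ : m < c (n + 1)) :
    blockIndex c m = n := by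
  refine Nat.findGreatest_eq_iff.2 ⟨hc.le_apply.trans h₁, fun _ => h₁, fun k hnk _ hk => ?_⟩
  exact absurd (hc.monotone (show n + 1 ≤ k from hnk)) (by omega)

theorem exists_eq_apply_add (hc : StrictMono c) (hc0 : c 0 = 0) (m : ℕ) :
    ∃ n j, j < c (n + 1) - c n ∧ m = c n + j := by
  have h₁ := apply_blockIndex_le hc0 m
  have h₂ := lt_apply_blockIndex_succ hc m
  exact ⟨blockIndex c m, m - c (blockIndex c m), by omega, by omega⟩

end BlockIndex

section WordBlock

variable {A : Type*} (w : ℕ → A) (c : ℕ → ℕ) (n : ℕ)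

@[simp]
theorem wordBlock_length : (wordBlock w c n).length = c (n + 1) - c n := by
  simp [wordBlock]

@[simp]
theorem wordBlock_getElem (j : ℕ) (hj : j < (wordBlock w c n).length) :
    (wordBlock w c n)[j] = w (c n + j) := by
  simp [wordBlock]

end WordBlock

section TransitionSystem

variable {V α : Type*} (E : V → V → Prop) (lab : V → α) {w : ℕ → α} {c : ℕ → ℕ}

theorem tsReaches_wordBlock_iff {x y : V} {n : ℕ} :
    TSReaches E lab x (wordBlock w c n) y ↔
      ∃ σ : ℕ → V, σ 0 = x ∧ σ (c (n + 1) - c n) = y ∧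
        ∀ j < c (n + 1) - c n, E (σ j) (σ (j + 1)) ∧ lab (σ j) = w (c n + j) := by
  simp [TSReaches]

theorem tsReaches_wordBlock_of_path (hc : Monotone c) {ρ : ℕ → V}
    (hρ : ∀ m, E (ρ m) (ρ (m + 1))) (hw : w = lab ∘ ρ) (n : ℕ) :
    TSReaches E lab (ρ (c n)) (wordBlock w c n) (ρ (c (n + 1))) := by
  refine (tsReaches_wordBlock_iff E lab).2 ⟨fun j => ρ (c n + j), rfl, ?_, fun j _ => ?_⟩
  · simp only [Nat.add_sub_cancel' (hc n.le_succ)]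
  · exact ⟨hρ _, by rw [hw]; rfl⟩

theorem exists_path_of_tsReaches_wordBlock (hc : StrictMono c) (hc0 : c 0 = 0) {x : ℕ → V}
    (hx : ∀ n, TSReaches E lab (x n) (wordBlock w c n) (x (n + 1))) :
    ∃ ρ : ℕ → V, ρ 0 = x 0 ∧ (∀ m, E (ρ m) (ρ (m + 1))) ∧ w = lab ∘ ρ := by
  choose σ hσ0 hσlen hσ using fun n => (tsReaches_wordBlock_iff E lab).1 (hx n)
  let ρ m := σ (blockIndex c m) (m - c (blockIndex c m))
  have hρσ : ∀ n j, j ≤ c (n + 1) - c n → ρ (c n + j) = σ n j := by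
    intro n j hj
    have hcn := hc n.lt_succ_self
    rcases hj.lt_or_eq with hj | rfl
    · have hidx : blockIndex c (c n + j) = n :=
        blockIndex_eq_of_le_of_lt hc (Nat.le_add_right _ j) (by omega)
      simp only [ρ, hidx, Nat.add_sub_cancel_left]
    -- At the right end of block `n` both `σ n` and `σ (n + 1)` give the vertex `x (n + 1)`.
    · have hidx := blockIndex_eq_of_le_of_lt hc le_rfl (hc (n + 1).lt_succ_self)
      simp only [ρ, Nat.add_sub_cancel' hcn.le, hidx, Nat.sub_self, hσ0, hσlen]
  refine ⟨ρ, by simpa [hc0, hσ0] using hρσ 0 0 (Nat.zero_le _), fun m => ?_,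
    funext fun m => ?_⟩
  · obtain ⟨n, j, hj, rfl⟩ := exists_eq_apply_add hc hc0 m
    rw [hρσ n j hj.le, Nat.add_assoc, hρσ n (j + 1) hj]
    exact (hσ n j hj).1
  · obtain ⟨n, j, hj, rfl⟩ := exists_eq_apply_add hc hc0 m
    simp only [Function.comp_apply, hρσ n j hj.le, (hσ n j hj).2]

theorem exists_path_iff_exists_tsReaches_wordBlock (vI : V) (hc : StrictMono c)
    (hc0 : c 0 = 0) :
    (∃ ρ : ℕ → V, ρ 0 = vI ∧ (∀ n, E (ρ n) (ρ (n + 1))) ∧ w = lab ∘ ρ) ↔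
      ∃ x : ℕ → V, x 0 = vI ∧
        ∀ n, TSReaches E lab (x n) (wordBlock w c n) (x (n + 1)) := by
  constructor
  · rintro ⟨ρ, hρ0, hρ, hw⟩
    exact ⟨ρ ∘ c, by simp [hc0, hρ0], tsReaches_wordBlock_of_path E lab hc.monotone hρ hw⟩
  · rintro ⟨x, rfl, hx⟩
    exact exists_path_of_tsReaches_wordBlock E lab hc hc0 hx

end TransitionSystem

theorem trace_mem_of_blockwise_equiv_general {V α : Type*}
    (E : V → V → Prop) (vI : V) (lab : V → α)
    (w w' : ℕ → α) (c c' : ℕ → ℕ)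
    (hc : StrictMono c) (hc' : StrictMono c') (hc0 : c 0 = 0) (hc0' : c' 0 = 0)
    (hblocks : ∀ n : ℕ, ∀ x y : V,
      TSReaches E lab x (wordBlock w c n) y ↔ TSReaches E lab x (wordBlock w' c' n) y) :
    (∃ ρ : ℕ → V, ρ 0 = vI ∧ (∀ n, E (ρ n) (ρ (n + 1))) ∧ w = lab ∘ ρ) ↔
    (∃ ρ : ℕ → V, ρ 0 = vI ∧ (∀ n, E (ρ n) (ρ (n + 1))) ∧ w' = lab ∘ ρ) := by
  rw [exists_path_iff_exists_tsReaches_wordBlock E lab vI hc hc0,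
    exists_path_iff_exists_tsReaches_wordBlock E lab vI hc' hc0']
  simp only [hblocks]

/-- If the infinite words `w` and `w′` admit factorizations into blocks
(via strictly monotone `c, c′` with `c 0 = c′ 0 = 0`) such that corresponding blocks
induce the same path transformations in the transition system `𝔗 = (V, E, v_I, λ)`
(with `V` finite), then `w ∈ Tr(𝔗)` iff `w′ ∈ Tr(𝔗)`. -/
theorem trace_mem_of_blockwise_equiv {V α : Type*} [Finite V]
    (E : V → V → Prop) (vI : V) (lab : V → α)
    (w w' : ℕ → α) (c c' : ℕ → ℕ)
    (hc : StrictMono c) (hc' : StrictMono c') (hc0 : c 0 = 0) (hc0' : c' 0 = 0)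
    (hblocks : ∀ n : ℕ, ∀ x y : V,
      TSReaches E lab x (wordBlock w c n) y ↔ TSReaches E lab x (wordBlock w' c' n) y) :
    (∃ ρ : ℕ → V, ρ 0 = vI ∧ (∀ n, E (ρ n) (ρ (n + 1))) ∧ w = lab ∘ ρ) ↔
    (∃ ρ : ℕ → V, ρ 0 = vI ∧ (∀ n, E (ρ n) (ρ (n + 1))) ∧ w' = lab ∘ ρ) :=
  trace_mem_of_blockwise_equiv_general E vI lab w w' c c' hc hc' hc0 hc0' hblocks
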